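/- Let L be an invertible linear operator on ℂ^{n₁} ⊗ ⋯ ⊗ ℂ^{n_p} mapping elementary tensors to multiples of elementary tensors. If a, b are elementary tensors differing on exactly r tensor factors (i.e., aᵢ ∥ bᵢ for all but exactly r indices i), then La and Lb, written as multiples of elementary tensors, differ on at most r tensor factors. -/

import Mathlib

noncomputable section

/-- The elementary tensor `a₁ ⊗ ⋯ ⊗ a_p` in `ℂ^{n₁} ⊗ ⋯ ⊗ ℂ^{n_p}`. -/
def tensP {p : ℕ} {n : Fin p → ℕ} (a : ∀ i, EuclideanSpace ℂ (Fin (n i))) :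
    EuclideanSpace ℂ (∀ i, Fin (n i)) :=
  WithLp.toLp 2 (fun f : (∀ i, Fin (n i)) => ∏ i, a i (f i))

/-- Two vectors are parallel (linearly dependent) if one is a scalar multiple of the
other. -/
def Par {N : ℕ} (x y : EuclideanSpace ℂ (Fin N)) : Prop :=
  ∃ c : ℂ, y = c • x ∨ x = c • y

/-! If `c • (u ⊗ F) + d • (v ⊗ G)` has rank at most one, with `c d ≠ 0` and `u`, `v` not
proportional, then `F` and `G` are proportional. Splitting off a factor on which two elementary
tensors differ, it follows that a combination `c • x + d • y` of them with `c d ≠ 0` is elementary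
only if they differ on no other factor. Since `x + (x with xᵢ replaced by v)` is elementary, `L`
maps pairs differing on one factor to pairs differing on at most one; walking from `a` to `b` one
factor at a time and using the triangle inequality for the number of differing factors gives
the bound. -/

theorem Finset.prod_apply_update_of_mem {ι M : Type*} {β : ι → Type*} [DecidableEq ι]
    [CommMonoid M] {s : Finset ι} {i : ι} (hi : i ∈ s) (w : ∀ k, β k → M) (f : ∀ k, β k)
    (v : β i) :
    ∏ k ∈ s, w k (Function.update f i v k) = w i v * ∏ k ∈ s.erase i, w k (f k) := by
  simp_rw [Function.apply_update w f, Finset.prod_update_of_mem hi,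
    Finset.sdiff_singleton_eq_erase]

theorem cross_mul_eq_of_add_eq_rankOne {K α β : Type*} [CommRing K] [IsDomain K]
    {u v w : α → K} {F G H : β → K} {c d e : K} (hc : c ≠ 0) (hd : d ≠ 0) {s t : α}
    (huv : u s * v t ≠ u t * v s)
    (h : ∀ a b, c * (u a * F b) + d * (v a * G b) = e * (w a * H b)) (f f' : β) :
    F f * G f' = F f' * G f := by
  -- The minor of the right-hand side at rows `s, t` and columns `f, f'` vanishes.
  have hzero : (u s * v t - u t * v s) * (c * d * (F f * G f' - F f' * G f)) = 0 := by
    linear_combination (c * (u t * F f') + d * (v t * G f')) * h s f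
      + e * (w s * H f) * h t f' - (c * (u s * F f') + d * (v s * G f')) * h t f
      - e * (w t * H f) * h s f'
  rcases mul_eq_zero.1 hzero with h0 | h0
  · exact absurd (sub_eq_zero.1 h0) huv
  · exact sub_eq_zero.1 ((mul_eq_zero.1 h0).resolve_left (mul_ne_zero hc hd))

namespace Par

variable {N : ℕ} {x y z : EuclideanSpace ℂ (Fin N)}

theorem refl (x : EuclideanSpace ℂ (Fin N)) : Par x x :=
  ⟨1, Or.inl (one_smul ℂ x).symm⟩

theorem symm (h : Par x y) : Par y x :=
  let ⟨c, hc⟩ := h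
  ⟨c, hc.symm⟩

theorem exists_eq_smul (hx : x ≠ 0) (h : Par x y) : ∃ c : ℂ, y = c • x := by
  obtain ⟨c, hc | hc⟩ := h
  · exact ⟨c, hc⟩
  · have hc0 : c ≠ 0 := by rintro rfl; exact hx (by rw [hc, zero_smul])
    exact ⟨c⁻¹, by rw [hc, smul_smul, inv_mul_cancel₀ hc0, one_smul]⟩

theorem trans (hy : y ≠ 0) (hxy : Par x y) (hyz : Par y z) : Par x z := by
  obtain ⟨c, rfl⟩ := hxy.symm.exists_eq_smul hy
  obtain ⟨c', rfl⟩ := hyz.exists_eq_smul hy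
  by_cases hc : c = 0
  · exact ⟨0, Or.inr (by rw [hc, zero_smul, zero_smul])⟩
  · exact ⟨c' * c⁻¹, Or.inl (by rw [smul_smul, mul_assoc, inv_mul_cancel₀ hc, mul_one])⟩

theorem of_mul_eq_mul (h : ∀ s t, x s * y t = x t * y s) : Par x y := by
  by_cases hx : x = 0
  · exact ⟨0, Or.inr (by simp [hx])⟩
  · obtain ⟨s, hs⟩ : ∃ s, x s ≠ 0 := by
      contrapose! hx
      ext s
      exact hx s
    refine ⟨y s / x s, Or.inl ?_⟩
    ext t
    rw [PiLp.smul_apply, smul_eq_mul, div_mul_eq_mul_div, eq_div_iff hs]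
    linear_combination -h t s

end Par

section ElementaryTensor

variable {p : ℕ} {n : Fin p → ℕ}

def diffFactors (x y : ∀ i, EuclideanSpace ℂ (Fin (n i))) : Set (Fin p) :=
  {i | ¬ Par (x i) (y i)}

theorem diffFactors_eq_empty_iff {x y : ∀ i, EuclideanSpace ℂ (Fin (n i))} :
    diffFactors x y = ∅ ↔ ∀ i, Par (x i) (y i) := by
  simp [diffFactors, Set.eq_empty_iff_forall_notMem]

theorem diffFactors_update_self (x y : ∀ i, EuclideanSpace ℂ (Fin (n i))) (i : Fin p) :
    diffFactors (Function.update x i (y i)) y = diffFactors x y \ {i} := by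
  ext k
  rcases eq_or_ne k i with rfl | hk
  · simpa [diffFactors] using Par.refl (y k)
  · simp [diffFactors, hk]

theorem ncard_diffFactors_le_add {x y z : ∀ i, EuclideanSpace ℂ (Fin (n i))}
    (hy : ∀ i, y i ≠ 0) :
    (diffFactors x z).ncard ≤ (diffFactors x y).ncard + (diffFactors y z).ncard := by
  refine (Set.ncard_le_ncard (fun i hi => ?_) (Set.toFinite _)).trans (Set.ncard_union_le _ _)
  by_contra hxyz
  simp only [diffFactors, Set.mem_union, Set.mem_ofPred_eq, not_or, not_not] at hxyz
  exact hi (hxyz.1.trans (hy i) hxyz.2)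

theorem tensP_apply (x : ∀ i, EuclideanSpace ℂ (Fin (n i))) (f : ∀ i, Fin (n i)) :
    tensP x f = ∏ i, x i (f i) :=
  rfl

theorem tensP_apply_update (x : ∀ i, EuclideanSpace ℂ (Fin (n i))) (f : ∀ i, Fin (n i))
    (i : Fin p) (v : Fin (n i)) :
    tensP x (Function.update f i v) = x i v * ∏ k ∈ Finset.univ.erase i, x k (f k) :=
  Finset.prod_apply_update_of_mem (Finset.mem_univ i) (fun k (m : Fin (n k)) => x k m) f v

theorem tensP_update_apply (x : ∀ i, EuclideanSpace ℂ (Fin (n i))) (i : Fin p)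
    (u : EuclideanSpace ℂ (Fin (n i))) (f : ∀ i, Fin (n i)) :
    tensP (Function.update x i u) f = u (f i) * ∏ k ∈ Finset.univ.erase i, x k (f k) := by
  rw [tensP_apply, ← Finset.mul_prod_erase _ _ (Finset.mem_univ i), Function.update_self]
  congr 1
  exact Finset.prod_congr rfl fun k hk => by rw [Function.update_of_ne (Finset.ne_of_mem_erase hk)]

theorem tensP_update_add (x : ∀ i, EuclideanSpace ℂ (Fin (n i))) (i : Fin p)
    (u v : EuclideanSpace ℂ (Fin (n i))) :
    tensP (Function.update x i (u + v)) =
      tensP (Function.update x i u) + tensP (Function.update x i v) := by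
  ext f
  simp only [PiLp.add_apply, tensP_update_apply]
  ring

theorem tensP_smul (γ : Fin p → ℂ) (x : ∀ i, EuclideanSpace ℂ (Fin (n i))) :
    tensP (fun i => γ i • x i) = (∏ i, γ i) • tensP x := by
  ext f
  simp only [PiLp.smul_apply, smul_eq_mul, tensP_apply, Finset.prod_mul_distrib]

theorem exists_forall_apply_ne_zero {x : ∀ i, EuclideanSpace ℂ (Fin (n i))}
    (hx : ∀ i, x i ≠ 0) : ∃ f : ∀ i, Fin (n i), ∀ i, x i (f i) ≠ 0 := by
  have h : ∀ i, ∃ m, x i m ≠ 0 := fun i => by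
    by_contra! h
    exact hx i (by ext m; exact h m)
  choose f hf using h
  exact ⟨f, hf⟩

theorem tensP_ne_zero {x : ∀ i, EuclideanSpace ℂ (Fin (n i))} (hx : ∀ i, x i ≠ 0) :
    tensP x ≠ 0 := by
  obtain ⟨f, hf⟩ := exists_forall_apply_ne_zero hx
  intro h0
  have h0f := congrArg (fun w => w f) h0
  simp only [tensP_apply, PiLp.zero_apply] at h0f
  exact Finset.prod_ne_zero_iff.2 (fun i _ => hf i) h0f

theorem ne_zero_of_tensP_ne_zero {x : ∀ i, EuclideanSpace ℂ (Fin (n i))} (hx : tensP x ≠ 0)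
    (i : Fin p) : x i ≠ 0 := by
  intro h0
  apply hx
  ext f
  exact Finset.prod_eq_zero (Finset.mem_univ i) (by rw [h0]; rfl)

theorem par_of_prod_mul_prod_comm {s : Finset (Fin p)} {x y : ∀ i, EuclideanSpace ℂ (Fin (n i))}
    (hx : ∀ i, x i ≠ 0) (hy : ∀ i, y i ≠ 0)
    (h : ∀ f f' : ∀ i, Fin (n i),
      (∏ k ∈ s, x k (f k)) * ∏ k ∈ s, y k (f' k) = (∏ k ∈ s, x k (f' k)) * ∏ k ∈ s, y k (f k))
    {j : Fin p} (hj : j ∈ s) : Par (x j) (y j) := by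
  obtain ⟨f, hf⟩ := exists_forall_apply_ne_zero hx
  obtain ⟨g, hg⟩ := exists_forall_apply_ne_zero hy
  have hyf : ∏ k ∈ s, y k (f k) ≠ 0 := by
    refine right_ne_zero_of_mul (a := ∏ k ∈ s, x k (g k)) ?_
    rw [← h]
    exact mul_ne_zero (Finset.prod_ne_zero_iff.2 fun k _ => hf k)
      (Finset.prod_ne_zero_iff.2 fun k _ => hg k)
  have hxr : ∏ k ∈ s.erase j, x k (f k) ≠ 0 := Finset.prod_ne_zero_iff.2 fun k _ => hf k
  have hyr : ∏ k ∈ s.erase j, y k (f k) ≠ 0 := by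
    rw [← Finset.mul_prod_erase _ _ hj] at hyf
    exact right_ne_zero_of_mul hyf
  refine Par.of_mul_eq_mul fun u v => mul_right_cancel₀ (mul_ne_zero hxr hyr) ?_
  have huv := h (Function.update f j u) (Function.update f j v)
  simp only [Finset.prod_apply_update_of_mem hj (fun k (m : Fin (n k)) => x k m),
    Finset.prod_apply_update_of_mem hj (fun k (m : Fin (n k)) => y k m)] at huv
  linear_combination huv

theorem par_of_tensP_eq_smul {x y : ∀ i, EuclideanSpace ℂ (Fin (n i))} {μ : ℂ}
    (hx : ∀ i, x i ≠ 0) (hy : ∀ i, y i ≠ 0) (h : tensP y = μ • tensP x) (j : Fin p) :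
    Par (x j) (y j) := by
  refine par_of_prod_mul_prod_comm hx hy (fun f f' => ?_) (Finset.mem_univ j)
  have hf := congrArg (fun w => w f) h
  have hf' := congrArg (fun w => w f') h
  simp only [PiLp.smul_apply, smul_eq_mul, tensP_apply] at hf hf'
  rw [hf, hf']
  ring

theorem exists_tensP_eq_smul_of_par {x y : ∀ i, EuclideanSpace ℂ (Fin (n i))}
    (hx : ∀ i, x i ≠ 0) (h : ∀ i, Par (x i) (y i)) : ∃ μ : ℂ, tensP y = μ • tensP x := by
  choose γ hγ using fun i => (h i).exists_eq_smul (hx i)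
  exact ⟨∏ i, γ i, by rw [← tensP_smul, ← funext hγ]⟩

theorem ncard_diffFactors_le_one_of_add_eq {x y z : ∀ i, EuclideanSpace ℂ (Fin (n i))}
    {c d e : ℂ} (hc : c ≠ 0) (hd : d ≠ 0) (hx : ∀ i, x i ≠ 0) (hy : ∀ i, y i ≠ 0)
    (h : c • tensP x + d • tensP y = e • tensP z) : (diffFactors x y).ncard ≤ 1 := by
  by_contra! hcard
  obtain ⟨i, j, hi, hj, hij⟩ := (Set.one_lt_ncard_iff (Set.toFinite _)).1 hcard
  obtain ⟨s, t, hst⟩ : ∃ s t, x i s * y i t ≠ x i t * y i s := by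
    by_contra! hmin
    exact hi (Par.of_mul_eq_mul hmin)
  have hsplit : ∀ (v : Fin (n i)) (f : ∀ i, Fin (n i)),
      c * (x i v * ∏ k ∈ Finset.univ.erase i, x k (f k)) +
        d * (y i v * ∏ k ∈ Finset.univ.erase i, y k (f k)) =
      e * (z i v * ∏ k ∈ Finset.univ.erase i, z k (f k)) := by
    intro v f
    simpa only [PiLp.add_apply, PiLp.smul_apply, smul_eq_mul, tensP_apply_update]
      using congrArg (fun w => w (Function.update f i v)) h
  have hcross := cross_mul_eq_of_add_eq_rankOne
    (F := fun f : ∀ i, Fin (n i) => ∏ k ∈ Finset.univ.erase i, x k (f k))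
    (G := fun f : ∀ i, Fin (n i) => ∏ k ∈ Finset.univ.erase i, y k (f k)) hc hd hst hsplit
  exact hj (par_of_prod_mul_prod_comm hx hy hcross
    (Finset.mem_erase.2 ⟨hij.symm, Finset.mem_univ j⟩))

end ElementaryTensor

section InjectiveMap

variable {p q : ℕ} {n : Fin p → ℕ} {m : Fin q → ℕ}
  {L : EuclideanSpace ℂ (∀ i, Fin (n i)) →ₗ[ℂ] EuclideanSpace ℂ (∀ j, Fin (m j))}

theorem ne_zero_of_map_tensP_eq_smul (hL : Function.Injective L)
    {x : ∀ i, EuclideanSpace ℂ (Fin (n i))} {x' : ∀ j, EuclideanSpace ℂ (Fin (m j))} {c : ℂ}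
    (hx : ∀ i, x i ≠ 0) (h : L (tensP x) = c • tensP x') : c ≠ 0 ∧ ∀ j, x' j ≠ 0 := by
  have hLx : L (tensP x) ≠ 0 := (map_ne_zero_iff L hL).2 (tensP_ne_zero hx)
  rw [h] at hLx
  obtain ⟨hc, hx'⟩ := smul_ne_zero_iff.1 hLx
  exact ⟨hc, ne_zero_of_tensP_ne_zero hx'⟩

theorem par_of_map_tensP_of_par (hL : Function.Injective L)
    {a b : ∀ i, EuclideanSpace ℂ (Fin (n i))} {a' b' : ∀ j, EuclideanSpace ℂ (Fin (m j))}
    {c d : ℂ} (ha : ∀ i, a i ≠ 0) (hb : ∀ i, b i ≠ 0) (hab : ∀ i, Par (a i) (b i))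
    (ha' : L (tensP a) = c • tensP a') (hb' : L (tensP b) = d • tensP b') (j : Fin q) :
    Par (a' j) (b' j) := by
  obtain ⟨μ, hμ⟩ := exists_tensP_eq_smul_of_par ha hab
  obtain ⟨-, ha'0⟩ := ne_zero_of_map_tensP_eq_smul hL ha ha'
  obtain ⟨hd, hb'0⟩ := ne_zero_of_map_tensP_eq_smul hL hb hb'
  have hdb' : d • tensP b' = (μ * c) • tensP a' := by
    rw [← hb', hμ, map_smul, ha', smul_smul]
  refine par_of_tensP_eq_smul (μ := d⁻¹ * (μ * c)) ha'0 hb'0 ?_ j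
  rw [← smul_smul, ← hdb', smul_smul, inv_mul_cancel₀ hd, one_smul]

theorem ncard_diffFactors_map_tensP_update_le_one (hL : Function.Injective L)
    (h : ∀ x : ∀ i, EuclideanSpace ℂ (Fin (n i)),
      ∃ (c : ℂ) (y : ∀ j, EuclideanSpace ℂ (Fin (m j))), L (tensP x) = c • tensP y)
    {x : ∀ i, EuclideanSpace ℂ (Fin (n i))} {i : Fin p} {v : EuclideanSpace ℂ (Fin (n i))}
    {x' y' : ∀ j, EuclideanSpace ℂ (Fin (m j))} {c d : ℂ} (hx : ∀ i, x i ≠ 0) (hv : v ≠ 0)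
    (hx' : L (tensP x) = c • tensP x') (hy' : L (tensP (Function.update x i v)) = d • tensP y') :
    (diffFactors x' y').ncard ≤ 1 := by
  have hxv : ∀ k, Function.update x i v k ≠ 0 := fun k => by
    rcases eq_or_ne k i with rfl | hk <;> simp [*]
  obtain ⟨hc, hx'0⟩ := ne_zero_of_map_tensP_eq_smul hL hx hx'
  obtain ⟨hd, hy'0⟩ := ne_zero_of_map_tensP_eq_smul hL hxv hy'
  obtain ⟨e, z, hz⟩ := h (Function.update x i (x i + v))
  refine ncard_diffFactors_le_one_of_add_eq (e := e) (z := z) hc hd hx'0 hy'0 ?_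
  rw [← hx', ← hy', ← map_add, ← hz, tensP_update_add, Function.update_eq_self]

theorem ncard_diffFactors_map_tensP_le (hL : Function.Injective L)
    (h : ∀ x : ∀ i, EuclideanSpace ℂ (Fin (n i)),
      ∃ (c : ℂ) (y : ∀ j, EuclideanSpace ℂ (Fin (m j))), L (tensP x) = c • tensP y)
    {a b : ∀ i, EuclideanSpace ℂ (Fin (n i))} {a' b' : ∀ j, EuclideanSpace ℂ (Fin (m j))}
    {c d : ℂ} (ha : ∀ i, a i ≠ 0) (hb : ∀ i, b i ≠ 0)
    (ha' : L (tensP a) = c • tensP a') (hb' : L (tensP b) = d • tensP b') :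
    (diffFactors a' b').ncard ≤ (diffFactors a b).ncard := by
  obtain ⟨k, hk⟩ : ∃ k, (diffFactors a b).ncard = k := ⟨_, rfl⟩
  induction k generalizing a c a' with
  | zero =>
    have hab := diffFactors_eq_empty_iff.1 ((Set.ncard_eq_zero (Set.toFinite _)).1 hk)
    rw [diffFactors_eq_empty_iff.2 (par_of_map_tensP_of_par hL ha hb hab ha' hb'),
      Set.ncard_empty, hk]
  | succ k ih =>
    obtain ⟨i, hi⟩ := (Set.ncard_pos (Set.toFinite _)).1 (by rw [hk]; omega)
    have hmid : ∀ k, Function.update a i (b i) k ≠ 0 := fun k => by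
      rcases eq_or_ne k i with rfl | hki <;> simp [*]
    obtain ⟨e, m', hm'⟩ := h (Function.update a i (b i))
    have hmidb : (diffFactors (Function.update a i (b i)) b).ncard = k := by
      rw [diffFactors_update_self, Set.ncard_sdiff_singleton_of_mem hi, hk, Nat.add_sub_cancel]
    calc (diffFactors a' b').ncard
        ≤ (diffFactors a' m').ncard + (diffFactors m' b').ncard :=
          ncard_diffFactors_le_add (ne_zero_of_map_tensP_eq_smul hL hmid hm').2
      _ ≤ 1 + k := add_le_add
          (ncard_diffFactors_map_tensP_update_le_one hL h ha (hb i) ha' hm') ((ih hmid hm' hmidb).trans hmidb.le)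
      _ = (diffFactors a b).ncard := by rw [hk, add_comm]

end InjectiveMap

theorem stmt15 {p : ℕ} {n : Fin p → ℕ} {r : ℕ}
    (L : EuclideanSpace ℂ (∀ i, Fin (n i)) ≃ₗ[ℂ] EuclideanSpace ℂ (∀ i, Fin (n i)))
    (h : ∀ x : ∀ i, EuclideanSpace ℂ (Fin (n i)),
      ∃ (c : ℂ) (y : ∀ i, EuclideanSpace ℂ (Fin (n i))), L (tensP x) = c • tensP y)
    (a b : ∀ i, EuclideanSpace ℂ (Fin (n i)))
    (ha : ∀ i, a i ≠ 0) (hb : ∀ i, b i ≠ 0)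
    (hr : {i : Fin p | ¬ Par (a i) (b i)}.ncard = r)
    (c d : ℂ) (a' b' : ∀ i, EuclideanSpace ℂ (Fin (n i)))
    (ha' : L (tensP a) = c • tensP a') (hb' : L (tensP b) = d • tensP b') :
    {i : Fin p | ¬ Par (a' i) (b' i)}.ncard ≤ r :=
  hr ▸ ncard_diffFactors_map_tensP_le (L := L.toLinearMap) L.injective h ha hb ha' hb'
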